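/- For λ ≥ 4, with θ = arccosh((λ-2)/2), the tridiagonal matrix Q_k(λ) is invertible, and when λ > 4 its inverse R has entries R_{ij} = (-1)^{i+j} [cosh((k+1-|i-j|)θ) - cosh((k+1-i-j)θ)] / [2 sinh θ · sinh((k+1)θ)] for 1 ≤ i,j ≤ k. -/

import Mathlib

open Real Matrix

/-- `Q_k(λ)`: `k×k` symmetric tridiagonal matrix with diagonal `λ-2` and off-diagonal `1`. -/
def Qmat (k : ℕ) (lam : ℝ) : Matrix (Fin k) (Fin k) ℝ :=
  fun i j => if i = j then lam - 2
    else if i.val + 1 = j.val ∨ j.val + 1 = i.val then 1 else 0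

/-- Inverse hyperbolic cosine (for `x ≥ 1`). -/
noncomputable def arcosh (x : ℝ) : ℝ := Real.log (x + Real.sqrt (x ^ 2 - 1))

/-
Conjugating by `S = diag((-1)^i)` turns `Q_k(λ)` into the Dirichlet problem
`(λ - 2) u_a - u_{a-1} - u_{a+1} = f_a`, `u_0 = u_{k+1} = 0`, so `Q_k(λ)⁻¹ = S G S / D` for any
Green's function `G` solving it with a point source of mass `D`. Writing `λ - 2 = 2 cosh θ`, the
homogeneous solutions are `cosh (tθ)`, and `G_ab = cosh ((k+1-|a-b|)θ) - cosh ((k+1-a-b)θ)` vanishes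
at `a = 0` and `a = k+1` and jumps by `D = 2 sinh θ sinh ((k+1)θ) ≠ 0` at `a = b` when `θ ≠ 0`.
At `λ = 4` (`θ = 0`) the solutions are affine and `G_ab = min(a,b) (k+1-max(a,b))`, `D = k+1`.
-/

lemma Qmat_apply_mul_alternating {k : ℕ} (lam : ℝ) (f : ℕ → ℝ) (hf0 : f 0 = 0) (i l : Fin k) :
    Qmat k lam i l * ((-1) ^ (l : ℕ) * f (l + 1)) =
      (if (l : ℕ) = i then (-1) ^ (i : ℕ) * ((lam - 2) * f (i + 1)) else 0) +
      (if (l : ℕ) = i - 1 then (-1) ^ (i : ℕ) * -f i else 0) +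
      (if (l : ℕ) = i + 1 then (-1) ^ (i : ℕ) * -f (i + 2) else 0) := by
  obtain ⟨i, hi⟩ := i
  obtain ⟨l, hl⟩ := l
  simp only [Qmat, Fin.mk.injEq]
  split_ifs <;> try omega
  -- at `i = 0` the truncated `i - 1` is `0`, and that term is `f 0 = 0`
  · obtain ⟨rfl, rfl⟩ : i = 0 ∧ l = 0 := by omega
    simp [hf0]
  · obtain rfl : l = i := by omega
    ring
  · obtain rfl : i = l + 1 := by omega
    rw [pow_succ]
    ring
  · obtain rfl : l = i + 1 := by omega
    rw [pow_succ]
    ring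
  · ring

lemma sum_Qmat_mul_alternating {k : ℕ} (lam : ℝ) (f : ℕ → ℝ) (hf0 : f 0 = 0)
    (hfk : f (k + 1) = 0) (i : Fin k) :
    ∑ l : Fin k, Qmat k lam i l * ((-1) ^ (l : ℕ) * f (l + 1)) =
      (-1) ^ (i : ℕ) * ((lam - 2) * f (i + 1) - f i - f (i + 2)) := by
  simp only [Qmat_apply_mul_alternating lam f hf0 i, Finset.sum_add_distrib]
  rw [Fin.sum_univ_eq_sum_range (fun l => if l = _ then _ else 0),
    Fin.sum_univ_eq_sum_range (fun l => if l = _ then _ else 0),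
    Fin.sum_univ_eq_sum_range (fun l => if l = _ then _ else 0)]
  simp only [Finset.sum_ite_eq', Finset.mem_range]
  rw [if_pos i.is_lt, if_pos (by omega)]
  split_ifs with h
  · ring
  · rw [show (i : ℕ) + 2 = k + 1 by omega, hfk]
    ring

lemma Qmat_mul_eq_one_of_green {k : ℕ} {lam D : ℝ} (hD : D ≠ 0) (G : ℕ → ℕ → ℝ)
    (hG0 : ∀ b, G 0 b = 0) (hGk : ∀ b ≤ k, G (k + 1) b = 0)
    (hG : ∀ a b, (lam - 2) * G (a + 1) b - G a b - G (a + 2) b = if a + 1 = b then D else 0) :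
    Qmat k lam * of (fun i j : Fin k => (-1) ^ (i.val + j.val) * G (i + 1) (j + 1) / D) = 1 := by
  ext i j
  have hcol := sum_Qmat_mul_alternating lam (fun a => (-1) ^ (j : ℕ) * (G a (j + 1) / D))
    (by simp [hG0]) (by simp [hGk _ j.is_lt]) i
  rw [mul_apply, one_apply]
  simp only [of_apply, pow_add, mul_assoc, mul_div_assoc] at hcol ⊢
  rw [hcol]
  trans (-1) ^ (i + j : ℕ) * ((lam - 2) * G (i + 1) (j + 1) - G i (j + 1) - G (i + 2) (j + 1)) / D
  · ring
  rw [hG]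
  by_cases h : i = j
  · simp [h, ← two_mul, pow_mul, hD]
  · simp [h, Fin.val_inj]

noncomputable def coshGreen (K θ : ℝ) (a b : ℕ) : ℝ :=
  cosh ((K - |(a : ℝ) - b|) * θ) - cosh ((K - a - b) * θ)

lemma cosh_sub_one_mul_add_cosh_add_one_mul (t θ : ℝ) :
    cosh ((t - 1) * θ) + cosh ((t + 1) * θ) = 2 * cosh θ * cosh (t * θ) := by
  rw [sub_mul, add_mul, one_mul, cosh_sub, cosh_add]
  ring

lemma coshGreen_recurrence (K θ : ℝ) (a b : ℕ) :
    2 * cosh θ * coshGreen K θ (a + 1) b - coshGreen K θ a b - coshGreen K θ (a + 2) b =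
      if a + 1 = b then 2 * sinh θ * sinh (K * θ) else 0 := by
  have hpair := fun t => cosh_sub_one_mul_add_cosh_add_one_mul t θ
  unfold coshGreen
  push_cast
  split_ifs with h
  · have hb : (b : ℝ) = a + 1 := by exact_mod_cast h.symm
    rw [hb, show (a : ℝ) - (a + 1) = -1 by ring, show (a : ℝ) + 1 - (a + 1) = 0 by ring,
      show (a : ℝ) + 2 - (a + 1) = 1 by ring, abs_neg, abs_one, abs_zero]
    linear_combination (norm := ring_nf) hpair (K - (a + 1) - (a + 1)) - 2 * cosh_sub (K * θ) θ
  · rcases Nat.lt_or_gt_of_ne h with h | h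
    · have hb : (a : ℝ) + 2 ≤ b := by exact_mod_cast h
      rw [abs_of_neg (by linarith), abs_of_neg (by linarith), abs_of_nonpos (by linarith)]
      linear_combination (norm := ring_nf) hpair (K - (a + 1) - b) - hpair (K + (a + 1) - b)
    · have hb : (b : ℝ) ≤ a := by exact_mod_cast Nat.lt_succ_iff.mp h
      rw [abs_of_nonneg (by linarith), abs_of_nonneg (by linarith), abs_of_nonneg (by linarith)]
      linear_combination (norm := ring_nf) hpair (K - (a + 1) - b) - hpair (K - (a + 1) + b)

lemma coshGreen_zero_left (K θ : ℝ) (b : ℕ) : coshGreen K θ 0 b = 0 := by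
  simp [coshGreen]

lemma coshGreen_succ_left_eq_zero {k b : ℕ} (θ : ℝ) (hb : b ≤ k + 1) :
    coshGreen (k + 1) θ (k + 1) b = 0 := by
  have : (b : ℝ) ≤ k + 1 := by exact_mod_cast hb
  rw [coshGreen, Nat.cast_succ, abs_of_nonneg (by linarith),
    show (k + 1 - (k + 1 - b)) * θ = -((k + 1 - (k + 1) - b) * θ) by ring, cosh_neg, sub_self]

def linGreen (K : ℝ) (a b : ℕ) : ℝ := (min a b : ℕ) * (K - (max a b : ℕ))

lemma linGreen_recurrence (K : ℝ) (a b : ℕ) :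
    2 * linGreen K (a + 1) b - linGreen K a b - linGreen K (a + 2) b =
      if a + 1 = b then K else 0 := by
  unfold linGreen
  rcases lt_trichotomy (a + 1) b with h | rfl | h
  · have : a ≤ b ∧ a + 2 ≤ b := by omega
    simp only [if_neg h.ne, min_eq_left, max_eq_right, h.le, this]
    push_cast
    ring
  · have : a ≤ a + 1 ∧ a + 1 ≤ a + 2 := by omega
    simp only [if_pos, min_self, max_self, min_eq_left, max_eq_right, min_eq_right, max_eq_left,
      this]
    push_cast
    ring
  · have : b ≤ a ∧ b ≤ a + 2 := by omega
    simp only [if_neg h.ne', min_eq_right, max_eq_left, h.le, this]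
    push_cast
    ring

lemma Qmat_mul_coshGreen {k : ℕ} {θ : ℝ} (hθ : θ ≠ 0) :
    Qmat k (2 * cosh θ + 2) * of (fun i j : Fin k => (-1) ^ (i.val + j.val) *
      coshGreen (k + 1) θ (i + 1) (j + 1) / (2 * sinh θ * sinh ((k + 1) * θ))) = 1 := by
  have hD : 2 * sinh θ * sinh ((k + 1) * θ) ≠ 0 := by
    simp [hθ, Nat.cast_add_one_ne_zero]
  refine Qmat_mul_eq_one_of_green hD _ (coshGreen_zero_left _ _)
    (fun b hb => coshGreen_succ_left_eq_zero θ (by omega)) (fun a b => ?_)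
  rw [add_sub_cancel_right]
  exact coshGreen_recurrence _ _ a b

lemma Qmat_four_mul_linGreen {k : ℕ} :
    Qmat k 4 * of (fun i j : Fin k => (-1) ^ (i.val + j.val) *
      linGreen (k + 1) (i + 1) (j + 1) / (k + 1)) = 1 := by
  refine Qmat_mul_eq_one_of_green (Nat.cast_add_one_ne_zero k) _ (fun b => ?_) (fun b hb => ?_)
    (fun a b => ?_)
  · simp [linGreen]
  · simp [linGreen, show b ≤ k + 1 by omega]
  · rw [show (4 : ℝ) - 2 = 2 by norm_num]
    exact linGreen_recurrence _ a b

theorem stmt7_general (k : ℕ) (lam : ℝ) (h4 : 4 ≤ lam)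
    (θ : ℝ) (hθ : θ = _root_.arcosh ((lam - 2) / 2)) :
    IsUnit (Qmat k lam).det ∧
    (4 < lam → ∀ i j : Fin k,
      (Qmat k lam)⁻¹ i j =
        (-1 : ℝ) ^ (i.val + j.val) *
          (Real.cosh (((k : ℝ) + 1 - |((i.val : ℝ) + 1) - ((j.val : ℝ) + 1)|) * θ) -
            Real.cosh (((k : ℝ) + 1 - ((i.val : ℝ) + 1) - ((j.val : ℝ) + 1)) * θ)) /
          (2 * Real.sinh θ * Real.sinh ((k + 1) * θ))) := by
  rcases h4.eq_or_lt with rfl | hlt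
  · exact ⟨isUnit_det_of_right_inverse Qmat_four_mul_linGreen, fun h => (lt_irrefl 4 h).elim⟩
  have hx : 1 < (lam - 2) / 2 := by linarith
  -- `_root_.arcosh` is Mathlib's `Real.arcosh` unfolded
  replace hθ : θ = Real.arcosh ((lam - 2) / 2) := hθ
  have hlam : lam = 2 * cosh θ + 2 := by
    rw [hθ, Real.cosh_arcosh hx.le]
    ring
  have hinv := Qmat_mul_coshGreen (k := k) (hθ ▸ Real.arcosh_pos hx).ne'
  rw [← hlam] at hinv
  refine ⟨isUnit_det_of_right_inverse hinv, fun _ i j => ?_⟩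
  rw [inv_eq_right_inv hinv, of_apply, coshGreen]
  push_cast
  rfl

theorem stmt7 (k : ℕ) (hk : 3 ≤ k) (lam : ℝ) (h4 : 4 ≤ lam)
    (θ : ℝ) (hθ : θ = _root_.arcosh ((lam - 2) / 2)) :
    IsUnit (Qmat k lam).det ∧
    (4 < lam → ∀ i j : Fin k,
      (Qmat k lam)⁻¹ i j =
        (-1 : ℝ) ^ (i.val + j.val) *
          (Real.cosh (((k : ℝ) + 1 - |((i.val : ℝ) + 1) - ((j.val : ℝ) + 1)|) * θ) -
            Real.cosh (((k : ℝ) + 1 - ((i.val : ℝ) + 1) - ((j.val : ℝ) + 1)) * θ)) /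
          (2 * Real.sinh θ * Real.sinh ((k + 1) * θ))) :=
  stmt7_general k lam h4 θ hθ
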